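/- Let m ≥ 2 and let p_j = (x_j, y_j) ∈ ℝ², j = 1,…,m, be points whose x-coordinates are pairwise distinct. If the set {p_1,…,p_m} is invariant under the reflection in the vertical line x = x̄, then the unique global minimizer of f(a,b) = max_{j=1,…,m} |y_j − a x_j − b| is (a₀, b₀) = (0, (max_j y_j + min_j y_j)/2); that is, the optimal linear function is the constant function y(x) ≡ (max_j y_j + min_j y_j)/2. -/
import Mathlib


/-- If the point set is invariant under the reflection in the line
`x = x̄`, then the unique global minimizer of the algebraic L∞-distance
`f(a,b) = max_j |y_j - a x_j - b|` is `(0, (max_j y_j + min_j y_j)/2)`. -/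
theorem stmt_17 (m : ℕ) (hm : 2 ≤ m) (x y : Fin m → ℝ)
    (hx : Function.Injective x)
    (hsym : ∀ j : Fin m, ∃ k : Fin m,
      x k = 2 * ((∑ i, x i) / m) - x j ∧ y k = y j) :
    ∀ a b : ℝ,
      ((∀ a' b' : ℝ,
        (Finset.univ.sup' ⟨⟨0, by omega⟩, Finset.mem_univ _⟩
            fun j => |y j - a * x j - b|) ≤
          Finset.univ.sup' ⟨⟨0, by omega⟩, Finset.mem_univ _⟩
            fun j => |y j - a' * x j - b'|) ↔
        (a = 0 ∧
         b = ((Finset.univ.sup' ⟨⟨0, by omega⟩, Finset.mem_univ _⟩ y) +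
              (Finset.univ.inf' ⟨⟨0, by omega⟩, Finset.mem_univ _⟩ y)) / 2)) := by
  intro a b
  have hm0 : 0 < m := by omega
  have hne : (Finset.univ : Finset (Fin m)).Nonempty := ⟨⟨0, hm0⟩, Finset.mem_univ _⟩
  set S : ℝ → ℝ → ℝ := fun p q => Finset.univ.sup' hne fun j => |y j - p * x j - q| with hS
  set M := Finset.univ.sup' hne y with hM
  set μ := Finset.univ.inf' hne y with hμ
  set xb := (∑ i, x i) / (m : ℝ) with hxb
  obtain ⟨j0, -, hj0⟩ := Finset.exists_mem_eq_sup' hne y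
  obtain ⟨j1, -, hj1⟩ := Finset.exists_mem_eq_inf' hne y
  rw [← hM] at hj0
  rw [← hμ] at hj1
  obtain ⟨k0, hk0x, hk0y⟩ := hsym j0
  obtain ⟨k1, hk1x, hk1y⟩ := hsym j1
  have hle : ∀ p q i, |y i - p * x i - q| ≤ S p q := by
    intro p q i
    simp only [hS]
    exact Finset.le_sup' (fun j => |y j - p * x j - q|) (Finset.mem_univ i)
  have hyM : ∀ i, y i ≤ M := by
    intro i; rw [hM]; exact Finset.le_sup' y (Finset.mem_univ i)
  have hyμ : ∀ i, μ ≤ y i := by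
    intro i; rw [hμ]; exact Finset.inf'_le y (Finset.mem_univ i)
  have htop : ∀ p q, M - (p * xb + q) ≤ S p q := by
    intro p q
    have h1 := hle p q j0
    have h2 := hle p q k0
    have e : (y j0 - p * x j0 - q) + (y k0 - p * x k0 - q)
        = 2 * (M - (p * xb + q)) := by
      rw [hk0x, hk0y, ← hj0]; ring
    have a1 := le_abs_self (y j0 - p * x j0 - q)
    have a2 := le_abs_self (y k0 - p * x k0 - q)
    linarith
  have hbot : ∀ p q, (p * xb + q) - μ ≤ S p q := by
    intro p q
    have h1 := hle p q j1
    have h2 := hle p q k1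
    have e : (y j1 - p * x j1 - q) + (y k1 - p * x k1 - q)
        = (-2) * ((p * xb + q) - μ) := by
      rw [hk1x, hk1y, ← hj1]; ring
    have a1 := neg_abs_le (y j1 - p * x j1 - q)
    have a2 := neg_abs_le (y k1 - p * x k1 - q)
    linarith
  have hlow : ∀ p q, (M - μ) / 2 ≤ S p q := by
    intro p q
    have h1 := htop p q
    have h2 := hbot p q
    linarith
  have hopt : S 0 ((M + μ) / 2) ≤ (M - μ) / 2 := by
    simp only [hS]
    apply Finset.sup'_le
    intro i _
    rw [abs_le]
    have h1 := hyM i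
    have h2 := hyμ i
    constructor <;> nlinarith
  constructor
  · intro H
    have hSab : S a b ≤ (M - μ) / 2 := le_trans (H 0 ((M + μ) / 2)) hopt
    have h1 : M - (a * xb + b) ≤ (M - μ) / 2 := le_trans (htop a b) hSab
    have h2 : (a * xb + b) - μ ≤ (M - μ) / 2 := le_trans (hbot a b) hSab
    -- individual equalities at the extremal points
    have t1 := le_trans (hle a b j0) hSab
    have t2 := le_trans (hle a b k0) hSab
    have t3 := le_trans (hle a b j1) hSab
    have t4 := le_trans (hle a b k1) hSab
    have e0 : (y j0 - a * x j0 - b) + (y k0 - a * x k0 - b)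
        = 2 * (M - (a * xb + b)) := by
      rw [hk0x, hk0y, ← hj0]; ring
    have e1 : (y j1 - a * x j1 - b) + (y k1 - a * x k1 - b)
        = (-2) * ((a * xb + b) - μ) := by
      rw [hk1x, hk1y, ← hj1]; ring
    have u1 := le_abs_self (y j0 - a * x j0 - b)
    have u2 := le_abs_self (y k0 - a * x k0 - b)
    have u3 := neg_abs_le (y j1 - a * x j1 - b)
    have u4 := neg_abs_le (y k1 - a * x k1 - b)
    have eqj0 : y j0 - a * x j0 - b = (M - μ) / 2 := by linarith
    have eqk0 : y k0 - a * x k0 - b = (M - μ) / 2 := by linarith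
    have eqj1 : y j1 - a * x j1 - b = -((M - μ) / 2) := by linarith
    have eqk1 : y k1 - a * x k1 - b = -((M - μ) / 2) := by linarith
    rw [← hj0] at eqj0
    rw [hk0y, ← hj0] at eqk0
    rw [← hj1] at eqj1
    rw [hk1y, ← hj1] at eqk1
    by_cases h0 : x j0 = x k0
    · by_cases h1' : x j1 = x k1
      · -- degenerate: both extremal points lie on the axis, so M = μ
        have hx0 : x j0 = xb := by rw [hk0x] at h0; linarith
        have hx1 : x j1 = xb := by rw [hk1x] at h1'; linarith
        have hjj : j0 = j1 := hx (hx0.trans hx1.symm)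
        have hMμ : M = μ := by rw [hj0, hj1, hjj]
        have hS0 : S a b ≤ 0 := by linarith
        have hall : ∀ i, y i - a * x i - b = 0 := by
          intro i
          have habs : |y i - a * x i - b| = 0 :=
            le_antisymm (le_trans (hle a b i) hS0) (abs_nonneg _)
          exact abs_eq_zero.mp habs
        have hy : ∀ i, y i = M := fun i =>
          le_antisymm (hyM i) (hMμ ▸ hyμ i)
        have hxne : x (⟨0, hm0⟩ : Fin m) ≠ x (⟨1, by omega⟩ : Fin m) := by
          intro h
          have := hx h
          simp [Fin.ext_iff] at this
        have g0 := hall ⟨0, hm0⟩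
        have g1 := hall ⟨1, by omega⟩
        rw [hy ⟨0, hm0⟩] at g0
        rw [hy ⟨1, by omega⟩] at g1
        have ha0 : a = 0 := by
          by_contra ha
          apply hxne
          have hax : a * x (⟨0, hm0⟩ : Fin m) = a * x (⟨1, by omega⟩ : Fin m) := by
            linarith
          exact mul_left_cancel₀ ha hax
        refine ⟨ha0, ?_⟩
        show b = (M + μ) / 2
        rw [ha0] at g0
        linarith
      · -- bottom pair has distinct x's
        have ha0 : a = 0 := by
          by_contra ha
          apply h1'
          have hax : a * x j1 = a * x k1 := by linarith
          exact mul_left_cancel₀ ha hax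
        refine ⟨ha0, ?_⟩
        show b = (M + μ) / 2
        rw [ha0] at eqj1
        linarith
    · -- top pair has distinct x's
      have ha0 : a = 0 := by
        by_contra ha
        apply h0
        have hax : a * x j0 = a * x k0 := by linarith
        exact mul_left_cancel₀ ha hax
      refine ⟨ha0, ?_⟩
      show b = (M + μ) / 2
      rw [ha0] at eqj0
      linarith
  · rintro ⟨rfl, hb⟩
    intro a' b'
    have hb' : b = (M + μ) / 2 := hb
    show S 0 b ≤ S a' b'
    rw [hb']
    exact le_trans hopt (hlow a' b')
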